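/- arXiv:1704.01652 — 4 statements merged into one kernel-verified Lean document; each statement's English description precedes it below -/
import Mathlib

section
/- The independence system M(k,h,m) is k-extendible: for every independent sets C ⊆ D and element u ∉ D with C ∪ {u} independent, there exists Y ⊆ D \ C with |Y| ≤ k such that (D \ Y) ∪ {u} is independent. -/
/-- `g_{m,k}(x) = min{x, 2km/h} + max{(x - 2km/h)/k, 0}` -/
noncomputable def g (k h m : ℕ) (x : ℝ) : ℝ :=
  min x (2 * k * m / h) + max ((x - 2 * k * m / h) / k) 0

/-- The ground set `N = ⋃_{i=1}^h H_i` with `H_i` disjoint of size `km` is modeled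
as `Fin h × Fin (k*m)`, where `H_i = {i} × Fin (k*m)` and `H_1` is `{0} × Fin (k*m)`. -/
abbrev Elem (k h m : ℕ) := Fin h × Fin (k * m)

/-- `Σ(S) = g_{m,k}(|S ∩ H_1|) + |S \ H_1|`. -/
noncomputable def Sigma' (k h m : ℕ) (S : Finset (Elem k h m)) : ℝ :=
  g k h m ((S.filter (fun p => (p.1 : ℕ) = 0)).card) +
    ((S.filter (fun p => (p.1 : ℕ) ≠ 0)).card : ℝ)

/-- `S` is independent in `M(k,h,m)` iff `g_{m,k}(|S ∩ H_1|) + |S \ H_1| ≤ m`. -/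
noncomputable def Indep (k h m : ℕ) (S : Finset (Elem k h m)) : Prop :=
  Sigma' k h m S ≤ (m : ℝ)

/-!
If `|D \ C| ≤ k`, remove all of `D \ C`, leaving `C ∪ {u}`. Otherwise remove any `k` elements
`Y ⊆ D \ C`; this does not increase `Σ`. Indeed `g x = x / k + (1 - 1/k) min(x, 2km/h)` is
nondecreasing with slopes between `1/k` and `1`. So if `u ∈ H₁`, either `Y` meets `H₁` (and `g` does
not grow) or `Y` has `k ≥ 1` elements outside `H₁`, which pay for the increase of at most `1` in `g`.
If `u ∉ H₁`, either `Y` has an element outside `H₁`, or `Y` consists of `k` elements of `H₁`, whose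
removal lowers `g` by at least `1`.
-/

open Finset

lemma card_filter_sdiff_add_card_filter {α : Type*} [DecidableEq α] (p : α → Prop)
    [DecidablePred p] {D Y : Finset α} (hYD : Y ⊆ D) :
    #((D \ Y).filter p) + #(Y.filter p) = #(D.filter p) := by
  rw [← card_union_of_disjoint (disjoint_filter_filter sdiff_disjoint), ← filter_union,
    sdiff_union_of_subset hYD]

section g

variable (k h m : ℕ)

lemma g_eq (x : ℝ) : g k h m x = x / k + (1 - (k : ℝ)⁻¹) * min x (2 * k * m / h) := by
  unfold g
  rcases le_total x (2 * k * m / h) with hx | hx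
  · rw [min_eq_left hx, max_eq_right (div_nonpos_of_nonpos_of_nonneg (by linarith) k.cast_nonneg)]
    ring
  · rw [min_eq_right hx, max_eq_left (div_nonneg (by linarith) k.cast_nonneg)]
    ring

variable {k h m}

lemma g_sub_g (x y : ℝ) : g k h m x - g k h m y =
    (x - y) / k + (1 - (k : ℝ)⁻¹) * (min x (2 * k * m / h) - min y (2 * k * m / h)) := by
  rw [g_eq, g_eq]
  ring

lemma g_sub_g_le {x y : ℝ} (hyx : y ≤ x) : g k h m x - g k h m y ≤ x - y := by
  have hmin : min x (2 * k * m / h) - min y (2 * k * m / h) ≤ x - y := by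
    rcases le_total x (2 * k * m / h) <;> rcases le_total y (2 * k * m / h) <;>
      simp only [min_eq_left, min_eq_right, *] <;> linarith
  calc g k h m x - g k h m y ≤ (x - y) / k + (1 - (k : ℝ)⁻¹) * (x - y) := by
        rw [g_sub_g]
        exact add_le_add_right (mul_le_mul_of_nonneg_left hmin
          (sub_nonneg.2 (Nat.cast_inv_le_one k))) _
    _ = x - y := by ring

lemma div_le_g_sub_g {x y : ℝ} (hyx : y ≤ x) : (x - y) / k ≤ g k h m x - g k h m y := by
  rw [g_sub_g, le_add_iff_nonneg_right]
  exact mul_nonneg (sub_nonneg.2 (Nat.cast_inv_le_one k))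
    (sub_nonneg.2 (min_le_min_right _ hyx))

lemma g_mono : Monotone (g k h m) := fun _ _ hxy =>
  sub_nonneg.1 ((div_nonneg (sub_nonneg.2 hxy) k.cast_nonneg).trans (div_le_g_sub_g hxy))

variable {a b : ℕ}

lemma g_succ_le_g_add_add (hk : 0 < k) (hab : a + b = k) (s : ℝ) :
    g k h m (s + 1) ≤ g k h m (s + a) + b := by
  rcases a.eq_zero_or_pos with rfl | ha
  · have hb : (1 : ℝ) ≤ b := by exact_mod_cast (show 1 ≤ b by omega)
    have : g k h m (s + 1) - g k h m s ≤ s + 1 - s := g_sub_g_le (by linarith)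
    rw [Nat.cast_zero, add_zero]
    linarith
  · have : g k h m (s + 1) ≤ g k h m (s + a) := g_mono (add_le_add_right (Nat.one_le_cast.2 ha) s)
    linarith [b.cast_nonneg (α := ℝ)]

lemma g_add_one_le_g_add_add (hk : 0 < k) (hab : a + b = k) (s : ℝ) :
    g k h m s + 1 ≤ g k h m (s + a) + b := by
  rcases b.eq_zero_or_pos with rfl | hb
  · obtain rfl : k = a := hab.symm
    have : (s + k - s) / k ≤ g k h m (s + k) - g k h m s := div_le_g_sub_g (by simp)
    rw [add_sub_cancel_left, div_self (by exact_mod_cast hk.ne')] at this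
    rw [Nat.cast_zero, add_zero]
    linarith
  · have : g k h m s ≤ g k h m (s + a) := g_mono (by simp)
    linarith [(Nat.one_le_cast (α := ℝ)).2 hb]

end g

lemma Sigma'_insert_sdiff_le {k h m : ℕ} (hk : 0 < k) {D Y : Finset (Elem k h m)}
    {u : Elem k h m} (hYD : Y ⊆ D) (hY : #Y = k) (huD : u ∉ D) :
    Sigma' k h m (insert u (D \ Y)) ≤ Sigma' k h m D := by
  have huDY : u ∉ D \ Y := fun hu => huD (mem_sdiff.1 hu).1
  have hsplit : #(Y.filter fun p => (p.1 : ℕ) = 0) + #(Y.filter fun p => (p.1 : ℕ) ≠ 0) = k :=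
    (card_filter_add_card_filter_not _).trans hY
  unfold Sigma'
  rw [← card_filter_sdiff_add_card_filter _ hYD, ← card_filter_sdiff_add_card_filter _ hYD,
    filter_insert, filter_insert]
  by_cases hu : (u.1 : ℕ) = 0
  · rw [if_pos hu, if_neg (not_not.2 hu), card_insert_of_notMem (by simp [huDY])]
    push_cast
    linarith [g_succ_le_g_add_add (h := h) (m := m) hk hsplit
      #((D \ Y).filter fun p => (p.1 : ℕ) = 0)]
  · rw [if_neg hu, if_pos hu, card_insert_of_notMem (by simp [huDY])]
    push_cast
    linarith [g_add_one_le_g_add_add (h := h) (m := m) hk hsplit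
      #((D \ Y).filter fun p => (p.1 : ℕ) = 0)]

theorem M_k_extendible_general (k h m : ℕ) (hk : 0 < k) :
    ∀ C D : Finset (Elem k h m), ∀ u : Elem k h m,
      C ⊆ D → Indep k h m C → Indep k h m D → u ∉ D → Indep k h m (insert u C) →
        ∃ Y ⊆ D \ C, Y.card ≤ k ∧ Indep k h m (insert u (D \ Y)) := by
  intro C D u hCD _ hD huD hCu
  by_cases hcard : #(D \ C) ≤ k
  · exact ⟨D \ C, subset_rfl, hcard, by rwa [Finset.sdiff_sdiff_eq_self hCD]⟩
  · obtain ⟨Y, hYC, hY⟩ := exists_subset_card_eq (not_le.1 hcard).le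
    exact ⟨Y, hYC, hY.le,
      (Sigma'_insert_sdiff_le hk (hYC.trans sdiff_subset) hY huD).trans hD⟩

/-- `M(k,h,m)` is `k`-extendible. -/
theorem M_k_extendible (k h m : ℕ) (hk : 0 < k) (hh : 0 < h) (hm : 0 < m)
    (hdiv : 2 * k ∣ h) :
    ∀ C D : Finset (Elem k h m), ∀ u : Elem k h m,
      C ⊆ D → Indep k h m C → Indep k h m D → u ∉ D → Indep k h m (insert u C) →
        ∃ Y ⊆ D \ C, Y.card ≤ k ∧ Indep k h m (insert u (D \ Y)) :=
  M_k_extendible_general k h m hk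
end

section
/- The independence system M(k,h,m) contains an independent set of size at least mk(1 - 2k/h), all of whose elements lie in H_1. -/
/-!
With `c = 2km/h`, an integer by assumption and at most `m` since `2k ≤ h`, take `k(m - c)`
elements of `H_1`. In `g_{m,k}` the `min` term is at most `c` and the `max` term at most
`m - c`, so the set is independent, and its size is `km - kc = mk(1 - 2k/h)`.
-/

open Finset

theorem Sigma'_eq_g_card {k h m : ℕ} {S : Finset (Elem k h m)} (hS : ∀ p ∈ S, (p.1 : ℕ) = 0) :
    Sigma' k h m S = g k h m #S := by
  have hout : S.filter (fun p => (p.1 : ℕ) ≠ 0) = ∅ :=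
    filter_false_of_mem fun p hp => not_not.mpr (hS p hp)
  rw [Sigma', filter_true_of_mem hS, hout, card_empty, Nat.cast_zero, add_zero]

theorem g_le_of_le_mul {k h m : ℕ} {x : ℝ} (hcm : 2 * k * m / h ≤ (m : ℝ))
    (hx : x ≤ k * (m - 2 * k * m / h)) : g k h m x ≤ m := by
  have hc : (0 : ℝ) ≤ 2 * k * m / h := by positivity
  have hmin : min x (2 * k * m / h) ≤ 2 * k * m / h := min_le_right _ _
  have hmax : max ((x - 2 * k * m / h) / k) 0 ≤ m - 2 * k * m / h :=
    max_le (div_le_of_le_mul₀ k.cast_nonneg (sub_nonneg.mpr hcm) (by linarith))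
      (sub_nonneg.mpr hcm)
  rw [g]
  linarith

theorem exists_subset_block_zero_card_eq {k h m a : ℕ} (hh : 0 < h) (ha : a ≤ k * m) :
    ∃ S : Finset (Elem k h m), (∀ p ∈ S, (p.1 : ℕ) = 0) ∧ #S = a := by
  have hblock : #({(⟨0, hh⟩ : Fin h)} ×ˢ (univ : Finset (Fin (k * m)))) = k * m := by
    simp
  obtain ⟨S, hsub, hcard⟩ := exists_subset_card_eq (hblock.symm ▸ ha)
  refine ⟨S, fun p hp => ?_, hcard⟩
  obtain ⟨hp1, -⟩ := mem_product.mp (hsub hp)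
  rw [mem_singleton.mp hp1]

theorem exists_large_independent_general (k h m : ℕ) (hh : 0 < h) (h2k : 2 * k ≤ h) (hint : h ∣ 2 * k * m) :
    ∃ S : Finset (Elem k h m), (∀ p ∈ S, (p.1 : ℕ) = 0) ∧ Indep k h m S ∧
      (m : ℝ) * k * (1 - 2 * k / h) ≤ S.card := by
  obtain ⟨c, hc⟩ := hint
  have hcR : (2 * k * m / h : ℝ) = c := by
    rw [div_eq_iff (by positivity)]
    exact_mod_cast hc.trans (mul_comm h c)
  have hcm : c ≤ m := Nat.le_of_mul_le_mul_left (hc ▸ Nat.mul_le_mul_right m h2k) hh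
  obtain ⟨S, hS, hcard⟩ :=
    exists_subset_block_zero_card_eq (k := k) (h := h) (m := m) hh
      (Nat.mul_le_mul_left k (Nat.sub_le m c))
  have hcardR : (#S : ℝ) = k * (m - c) := by
    rw [hcard, Nat.cast_mul, Nat.cast_sub hcm]
  refine ⟨S, hS, ?_, ?_⟩
  · rw [Indep, Sigma'_eq_g_card hS]
    exact g_le_of_le_mul (by rw [hcR]; exact_mod_cast hcm) (by rw [hcR, hcardR])
  · rw [hcardR, ← hcR]
    exact (by ring : _ = _).le

/-- `M(k,h,m)` contains an independent set of size at least `mk(1 - 2k/h)` whose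
elements all lie in `H_1`. -/
theorem exists_large_independent (k h m : ℕ) (hk : 0 < k) (hh : 0 < h) (hm : 0 < m)
    (hdiv : 2 * k ∣ h) (h2k : 2 * k ≤ h) (hint : h ∣ 2 * k * m) :
    ∃ S : Finset (Elem k h m), (∀ p ∈ S, (p.1 : ℕ) = 0) ∧ Indep k h m S ∧
      (m : ℝ) * k * (1 - 2 * k / h) ≤ S.card :=
  exists_large_independent_general k h m hh h2k hint
end

section
/- The ratio between the maximum size of an independent set in M(k,h,m) and in M'(k,h,m) is at least k(1 - 2k/h), where M'(k,h,m) is the uniform matroid of rank m on the same ground set. -/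
/-- `S` is independent in the uniform matroid `M'(k,h,m)` iff `|S| ≤ m`. -/
def Indep' (k h m : ℕ) (S : Finset (Elem k h m)) : Prop := S.card ≤ m

/-- Left of the breakpoint `c = 2km/h`, the line of slope `1/k ≤ 1` through `(c, c)` lies
above the diagonal. -/
theorem g_le_affine {k : ℕ} (hk : 0 < k) (h m : ℕ) (x : ℝ) :
    g k h m x ≤ 2 * k * m / h + (x - 2 * k * m / h) / k := by
  set c : ℝ := 2 * k * m / h
  have hk1 : (1 : ℝ) ≤ k := by exact_mod_cast hk
  have hk0 : (0 : ℝ) < k := by linarith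
  unfold g
  rcases le_total x c with hxc | hcx
  · have hdiv : (x - c) / k ≤ 0 := div_nonpos_of_nonpos_of_nonneg (by linarith) hk0.le
    have hshrink : x - c ≤ (x - c) / k := by
      rw [le_div_iff₀ hk0]; nlinarith
    rw [min_eq_left hxc, max_eq_right hdiv]
    linarith
  · rw [min_eq_right hcx, max_eq_left (div_nonneg (by linarith) hk0.le)]

theorem sigma'_of_forall_fst_eq_zero {k h m : ℕ} {S : Finset (Elem k h m)}
    (hS : ∀ p ∈ S, (p.1 : ℕ) = 0) : Sigma' k h m S = g k h m S.card := by
  rw [Sigma', Finset.filter_true_of_mem hS,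
    Finset.filter_false_of_mem fun p hp => not_not_intro (hS p hp)]
  simp

theorem indep_of_forall_fst_eq_zero {k h m : ℕ} (hk : 0 < k) {S : Finset (Elem k h m)}
    (hS : ∀ p ∈ S, (p.1 : ℕ) = 0)
    (hcard : (S.card : ℝ) ≤ k * m - (k - 1) * (2 * k * m / h)) : Indep k h m S := by
  have hk0 : (0 : ℝ) < k := by exact_mod_cast hk
  have hline : 2 * k * m / h + ((S.card : ℝ) - 2 * k * m / h) / k ≤ m := by
    rw [← le_sub_iff_add_le', div_le_iff₀ hk0]
    linarith
  rw [Indep, sigma'_of_forall_fst_eq_zero hS]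
  exact (g_le_affine hk h m _).trans hline

theorem exists_subset_fst_eq_zero_card_eq {k h m : ℕ} (hh : 0 < h) {n : ℕ} (hn : n ≤ k * m) :
    ∃ S : Finset (Elem k h m), (∀ p ∈ S, (p.1 : ℕ) = 0) ∧ S.card = n := by
  obtain ⟨J, -, hJ⟩ := Finset.exists_subset_card_eq (s := (Finset.univ : Finset (Fin (k * m))))
    (by simpa using hn)
  refine ⟨{(⟨0, hh⟩ : Fin h)} ×ˢ J, fun p hp => ?_, by simp [hJ]⟩
  rw [Finset.mem_product, Finset.mem_singleton] at hp
  rw [hp.1]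

/-- With `c = 2km/h`, the witness is a set of `k(m - c)` elements of `H_1`. -/
theorem ratio_lower_bound_general (k h m : ℕ) (hk : 0 < k) (h2k : 2 * k ≤ h) (hint : h ∣ 2 * k * m) :
    ∃ S : Finset (Elem k h m), Indep k h m S ∧
      ∀ T : Finset (Elem k h m), Indep' k h m T →
        (k : ℝ) * (1 - 2 * k / h) * T.card ≤ S.card := by
  obtain ⟨c, hc⟩ := hint
  have hh : 0 < h := by omega
  have hcm : c ≤ m := Nat.le_of_mul_le_mul_left (hc ▸ Nat.mul_le_mul_right m h2k) hh
  have hhr : (0 : ℝ) < h := by exact_mod_cast hh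
  have hcr : (c : ℝ) = 2 * k * m / h := by
    rw [eq_div_iff hhr.ne']; exact_mod_cast (hc.trans (mul_comm h c)).symm
  obtain ⟨S, hS, hScard⟩ :=
    exists_subset_fst_eq_zero_card_eq (k := k) (m := m) hh (Nat.mul_le_mul_left k (Nat.sub_le m c))
  have hScard' : (S.card : ℝ) = k * m - k * (2 * k * m / h) := by
    rw [hScard, ← hcr, Nat.cast_mul, Nat.cast_sub hcm]; ring
  refine ⟨S, indep_of_forall_fst_eq_zero hk hS ?_, fun T hT => ?_⟩
  · rw [hScard']
    nlinarith [hcr ▸ (Nat.cast_nonneg c : (0 : ℝ) ≤ c)]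
  · have hcoef : 0 ≤ (k : ℝ) * (1 - 2 * k / h) := by
      have : 2 * (k : ℝ) / h ≤ 1 := by
        rw [div_le_one hhr]; exact_mod_cast h2k
      exact mul_nonneg (Nat.cast_nonneg k) (by linarith)
    calc (k : ℝ) * (1 - 2 * k / h) * T.card ≤ (k : ℝ) * (1 - 2 * k / h) * m := by
          gcongr; exact_mod_cast hT
      _ = S.card := by rw [hScard']; ring

/-- The ratio between the maximum size of an independent set in `M(k,h,m)` and in
`M'(k,h,m)` is at least `k(1 - 2k/h)`. -/
theorem ratio_lower_bound (k h m : ℕ) (hk : 0 < k) (hh : 0 < h) (hm : 0 < m)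
    (hdiv : 2 * k ∣ h) (h2k : 2 * k ≤ h) (hint : h ∣ 2 * k * m) :
    ∃ S : Finset (Elem k h m), Indep k h m S ∧
      ∀ T : Finset (Elem k h m), Indep' k h m T →
        (k : ℝ) * (1 - 2 * k / h) * T.card ≤ S.card :=
  ratio_lower_bound_general k h m hk h2k hint
end

section
/- If S is a uniformly random subset of size s of the ground set N, where m < s ≤ km, then the probability that S is independent in M(k,h,m) but not in M'(k,h,m), or vice versa, is at most exp(-2km/h²). -/
open scoped Classical
open Finset Nat

theorem choose_mul_pow_le_choose_mul_pow {K N : ℕ} (hKN : K ≤ N) (a : ℕ) :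
    K.choose a * N ^ a ≤ N.choose a * K ^ a := by
  induction a with
  | zero => simp
  | succ a ih =>
    have hstep : (K - a) * N ≤ (N - a) * K := by
      rw [Nat.sub_mul, Nat.sub_mul, Nat.mul_comm N K]
      exact Nat.sub_le_sub_left (Nat.mul_le_mul_left a hKN) _
    refine Nat.le_of_mul_le_mul_left ?_ a.succ_pos
    calc (a + 1) * (K.choose (a + 1) * N ^ (a + 1))
        = K.choose (a + 1) * (a + 1) * (N ^ a * N) := by ring
      _ = (K.choose a * N ^ a) * ((K - a) * N) := by rw [choose_succ_right_eq]; ring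
      _ ≤ (N.choose a * K ^ a) * ((N - a) * K) := Nat.mul_le_mul ih hstep
      _ = N.choose (a + 1) * (a + 1) * (K ^ a * K) := by rw [choose_succ_right_eq]; ring
      _ = (a + 1) * (N.choose (a + 1) * K ^ (a + 1)) := by ring

theorem choose_div_choose_le_div_pow {K N : ℕ} (hKN : K ≤ N) (a : ℕ) :
    (K.choose a / N.choose a : ℝ) ≤ (K / N : ℝ) ^ a := by
  rcases lt_or_ge N a with hNa | haN
  · rw [choose_eq_zero_of_lt hNa, cast_zero, div_zero]; positivity
  rcases Nat.eq_zero_or_pos N with rfl | hN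
  · obtain rfl : a = 0 := by omega
    simp
  rw [div_pow, div_le_div_iff₀ (mod_cast choose_pos haN) (by positivity),
    mul_comm _ (N.choose a : ℝ)]
  exact_mod_cast choose_mul_pow_le_choose_mul_pow hKN a

section

variable {α : Type*} [Fintype α]

theorem card_filter_le_card_filter_mul_choose_le (p : α → Prop) [DecidablePred p] {s a : ℕ}
    (has : a ≤ s) :
    #{S ∈ (univ : Finset α).powersetCard s | a ≤ #(S.filter p)} * (Fintype.card α).choose a ≤
      (#(univ.filter p)).choose a * s.choose a * (Fintype.card α).choose s := by
  classical
  set N := Fintype.card α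
  have hcover : {S ∈ (univ : Finset α).powersetCard s | a ≤ #(S.filter p)} ⊆
      ((univ.filter p).powersetCard a).biUnion
        fun T => {S ∈ (univ : Finset α).powersetCard s | T ⊆ S} := by
    intro S hS
    obtain ⟨hSs, haS⟩ := mem_filter.1 hS
    obtain ⟨T, hTS, rfl⟩ := exists_subset_card_eq haS
    refine mem_biUnion.2 ⟨T, mem_powersetCard.2 ⟨?_, rfl⟩, mem_filter.2 ⟨hSs, ?_⟩⟩
    · exact hTS.trans (filter_subset_filter p (subset_univ S))
    · exact hTS.trans (filter_subset p S)
  have hcount : #{S ∈ (univ : Finset α).powersetCard s | a ≤ #(S.filter p)} ≤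
      (#(univ.filter p)).choose a * (N - a).choose (s - a) := by
    calc _ ≤ _ := card_le_card hcover
      _ ≤ _ := card_biUnion_le
      _ = ∑ _T ∈ (univ.filter p).powersetCard a, (N - a).choose (s - a) := by
          refine sum_congr rfl fun T hT => ?_
          obtain ⟨-, rfl⟩ := mem_powersetCard.1 hT
          rw [card_filter_powersetCard_subset T univ s (subset_univ T) has, Finset.card_univ]
      _ = _ := by rw [sum_const, card_powersetCard, smul_eq_mul]
  calc _ ≤ (#(univ.filter p)).choose a * (N - a).choose (s - a) * N.choose a :=
        Nat.mul_le_mul_right _ hcount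
    _ = _ := by rw [mul_assoc, mul_comm _ (N.choose a), ← choose_mul has]; ring

theorem card_filter_le_card_filter_div_le (p : α → Prop) [DecidablePred p] (s a : ℕ) :
    (#{S ∈ (univ : Finset α).powersetCard s | a ≤ #(S.filter p)} : ℝ) /
        #((univ : Finset α).powersetCard s) ≤
      (s * #(univ.filter p) / Fintype.card α : ℝ) ^ a / a ! := by
  set N := Fintype.card α
  rcases lt_or_ge s a with hsa | has
  · have hempty : {S ∈ (univ : Finset α).powersetCard s | a ≤ #(S.filter p)} = ∅ :=
      filter_false_of_mem fun S hS => by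
        have := (mem_powersetCard.1 hS).2 ▸ card_filter_le S p
        omega
    rw [hempty, card_empty, cast_zero, zero_div]
    positivity
  rcases lt_or_ge N s with hNs | hsN
  · rw [powersetCard_eq_empty.2 (by rwa [Finset.card_univ]), card_empty, cast_zero, div_zero]
    positivity
  rw [card_powersetCard, Finset.card_univ]
  calc _ ≤ ((#(univ.filter p)).choose a / N.choose a : ℝ) * s.choose a := by
        rw [div_mul_eq_mul_div, div_le_div_iff₀ (mod_cast choose_pos hsN)
          (mod_cast choose_pos (has.trans hsN))]
        exact_mod_cast card_filter_le_card_filter_mul_choose_le p has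
    _ ≤ (#(univ.filter p) / N : ℝ) ^ a * (s ^ a / a !) := by
        gcongr
        · exact choose_div_choose_le_div_pow (card_le_univ _) a
        · exact choose_le_pow_div a s
    _ = _ := by ring

end

open Real

theorem exp_five_div_four_le_four : exp (5 / 4) ≤ 4 := by
  refine le_of_pow_le_pow_left₀ four_ne_zero (by norm_num) ?_
  calc exp (5 / 4) ^ 4 = exp 1 ^ 5 := by rw [← exp_nat_mul, ← exp_nat_mul]; norm_num
    _ ≤ 2.7182818286 ^ 5 := by gcongr; exact exp_one_lt_d9.le
    _ ≤ 4 ^ 4 := by norm_num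

theorem pow_div_factorial_le_exp_neg_div_four {t : ℝ} (ht : 0 ≤ t) {a : ℕ} (hta : 4 * t ≤ a) :
    t ^ a / a ! ≤ exp (-a / 4) := by
  have he : exp 1 / 4 ≤ exp (-1 / 4) := by
    have hsplit : exp 1 = exp (5 / 4) * exp (-1 / 4) := by rw [← exp_add]; norm_num
    rw [div_le_iff₀ four_pos, hsplit, mul_comm _ (4 : ℝ)]
    gcongr
    exact exp_five_div_four_le_four
  calc t ^ a / a ! ≤ (a / 4 : ℝ) ^ a / a ! := by gcongr; linarith
    _ = ((a : ℝ) ^ a / a !) / 4 ^ a := by rw [div_pow, div_div, div_div, mul_comm]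
    _ ≤ exp a / 4 ^ a := by gcongr; exact pow_div_factorial_le_exp _ (by positivity) a
    _ = (exp 1 / 4) ^ a := by rw [div_pow, ← exp_nat_mul, mul_one]
    _ ≤ exp (-1 / 4) ^ a := by gcongr
    _ = exp (-a / 4) := by rw [← exp_nat_mul]; ring_nf

theorem div_pow_div_factorial_le_exp_neg {k h m s : ℝ} {a : ℕ} (hk : 2 ≤ k) (hh : 4 ≤ h)
    (hm : 0 ≤ m) (hms : m ≤ s) (ha : 2 * k * m / h + (s - m) ≤ a) :
    (s / h) ^ a / a ! ≤ exp (-(2 * k * m) / h ^ 2) := by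
  have hc : 0 ≤ 2 * k * m / h := div_nonneg (by nlinarith) (by linarith)
  have hsa : 4 * (s / h) ≤ a := by
    have hhc : h * (2 * k * m / h) = 2 * k * m := mul_div_cancel₀ _ (by linarith)
    rw [mul_div_assoc', div_le_iff₀ (by linarith)]
    nlinarith
  calc (s / h) ^ a / a ! ≤ exp (-a / 4) :=
        pow_div_factorial_le_exp_neg_div_four (div_nonneg (by linarith) (by linarith)) hsa
    _ ≤ exp (-(2 * k * m) / h ^ 2) := by
        refine exp_le_exp.2 ?_
        rw [neg_div, neg_div, neg_le_neg_iff, pow_two, ← div_div]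
        calc 2 * k * m / h / h ≤ 2 * k * m / h / 4 := by gcongr
          _ ≤ a / 4 := by gcongr; linarith

theorem one_lt_and_add_sub_le_of_g_add_le {k h m : ℕ} {x y : ℝ} (hk : 0 < k)
    (hxy : (m : ℝ) < x + y) (hg : g k h m x + y ≤ m) :
    1 < k ∧ 2 * k * m / h + (x + y - m) ≤ x := by
  set c : ℝ := 2 * k * m / h
  have hk' : (0 : ℝ) < k := by exact_mod_cast hk
  have hcx : c < x := by
    by_contra! hxc
    have hgx : g k h m x = x := by
      rw [g, min_eq_left hxc, max_eq_right (div_nonpos_of_nonpos_of_nonneg (by linarith) hk'.le),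
        add_zero]
    linarith
  have hg' : c + (x - c) / k + y ≤ m := by
    rwa [g, min_eq_right hcx.le, max_eq_left (div_nonneg (by linarith) hk'.le)] at hg
  have key : (k : ℝ) * (x + y - m) ≤ (k - 1) * (x - c) := by
    have := mul_le_mul_of_nonneg_left hg' hk'.le
    rw [mul_add, mul_add, mul_div_cancel₀ _ hk'.ne'] at this
    linarith
  refine ⟨?_, by nlinarith⟩
  by_contra! hk1
  have : (k : ℝ) ≤ 1 := by exact_mod_cast hk1
  nlinarith

theorem Indep.one_lt_and_add_sub_le_card_filter {k h m : ℕ} {S : Finset (Elem k h m)}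
    (hk : 0 < k) (hS : m < #S) (hI : Indep k h m S) :
    1 < k ∧ 2 * k * m / h + (#S - m : ℝ) ≤ #(S.filter fun p => (p.1 : ℕ) = 0) := by
  have hsplit : (#S : ℝ) =
      #(S.filter fun p => (p.1 : ℕ) = 0) + #(S.filter fun p => (p.1 : ℕ) ≠ 0) := by
    exact_mod_cast (card_filter_add_card_filter_not _).symm
  replace hS : (m : ℝ) < #S := by exact_mod_cast hS
  rw [hsplit] at hS ⊢
  exact one_lt_and_add_sub_le_of_g_add_le hk hS hI

theorem card_filter_fst_eq_zero {k h m : ℕ} (hh : 0 < h) :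
    #(univ.filter fun p : Elem k h m => (p.1 : ℕ) = 0) = k * m := by
  have hH : (univ.filter fun p : Elem k h m => (p.1 : ℕ) = 0) = {⟨0, hh⟩} ×ˢ univ := by
    ext ⟨i, j⟩
    simp [Fin.ext_iff, eq_comm]
  simp [hH]

theorem prob_distinguish_le_general (k h m s : ℕ) (hk : 0 < k) (hh : 0 < h) (hm : 0 < m)
    (hdiv : 2 * k ∣ h) (hlo : m < s) :
    (((Finset.univ.powersetCard s :
          Finset (Finset (Elem k h m))).filter
        (fun S => (Indep k h m S ∧ ¬ Indep' k h m S) ∨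
                  (Indep' k h m S ∧ ¬ Indep k h m S))).card : ℝ) /
        ((Finset.univ.powersetCard s : Finset (Finset (Elem k h m))).card : ℝ)
      ≤ Real.exp (-(2 * k * m) / h ^ 2) := by
  set a := ⌈2 * k * m / h + (s - m : ℝ)⌉₊
  have hbad : ∀ S ∈ (univ : Finset (Elem k h m)).powersetCard s,
      (Indep k h m S ∧ ¬ Indep' k h m S) ∨ (Indep' k h m S ∧ ¬ Indep k h m S) →
        1 < k ∧ a ≤ #(S.filter fun p => (p.1 : ℕ) = 0) := by
    intro S hS hSbad
    obtain rfl := (mem_powersetCard.1 hS).2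
    have hI : Indep k h m S := (hSbad.resolve_right fun h' => by unfold Indep' at h'; omega).1
    obtain ⟨hk1, hx⟩ := hI.one_lt_and_add_sub_le_card_filter hk hlo
    exact ⟨hk1, Nat.ceil_le.2 hx⟩
  by_cases hk1 : 1 < k
  swap
  · rw [filter_false_of_mem fun S hS hSbad => hk1 (hbad S hS hSbad).1, card_empty, cast_zero,
      zero_div]
    positivity
  have hh4 : 4 ≤ h := (show 4 ≤ 2 * k by omega).trans (Nat.le_of_dvd hh hdiv)
  calc _ ≤ (#{S ∈ (univ : Finset (Elem k h m)).powersetCard s |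
            a ≤ #(S.filter fun p => (p.1 : ℕ) = 0)} : ℝ) / #(univ.powersetCard s) := by
        gcongr with S hS
        exact fun hSbad => (hbad S hS hSbad).2
    _ ≤ (s * #(univ.filter fun p : Elem k h m => (p.1 : ℕ) = 0) /
          Fintype.card (Elem k h m) : ℝ) ^ a / a ! := card_filter_le_card_filter_div_le _ s a
    _ = (s / h : ℝ) ^ a / a ! := by
        rw [card_filter_fst_eq_zero hh, Fintype.card_prod, Fintype.card_fin, Fintype.card_fin]
        push_cast
        rw [mul_div_mul_right _ _ (by positivity)]
    _ ≤ exp (-(2 * k * m) / h ^ 2) :=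
        div_pow_div_factorial_le_exp_neg (by exact_mod_cast hk1) (by exact_mod_cast hh4)
          (cast_nonneg m) (by exact_mod_cast hlo.le) (Nat.le_ceil _)

/-- For a uniformly random subset `S` of size `s` of the ground set, with
`m < s ≤ km`, the probability that `S` is independent in exactly one of
`M(k,h,m)` and `M'(k,h,m)` is at most `exp(-2km/h²)`. -/
theorem prob_distinguish_le (k h m s : ℕ) (hk : 0 < k) (hh : 0 < h) (hm : 0 < m)
    (hdiv : 2 * k ∣ h) (hlo : m < s) (hhi : s ≤ k * m) :
    (((Finset.univ.powersetCard s :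
          Finset (Finset (Elem k h m))).filter
        (fun S => (Indep k h m S ∧ ¬ Indep' k h m S) ∨
                  (Indep' k h m S ∧ ¬ Indep k h m S))).card : ℝ) /
        ((Finset.univ.powersetCard s : Finset (Finset (Elem k h m))).card : ℝ)
      ≤ Real.exp (-(2 * k * m) / h ^ 2) :=
  prob_distinguish_le_general k h m s hk hh hm hdiv hlo
end
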